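/- arXiv:2306.05130 — 2 statements merged into one kernel-verified Lean document; each statement's English description precedes it below -/
import Mathlib

section
/- Fix d ≥ 2 and n ≥ 2. Let η be a trivial even configuration on the torus 𝕋_n^d and let γ be (the edge set of) a wrap-around. Then the even configuration η △ γ, obtained as the symmetric difference of the open edge sets of η and γ, is non-trivial. -/
open MeasureTheory

noncomputable section

attribute [local instance] Classical.propDecidable

instance : MeasurableSpace (ZMod 2) := ⊤

/-- The source (mod-2 boundary) of a configuration on a set `E` of edges, at a vertex `v`. -/
def srcAt {V : Type*} {E : Set (Sym2 V)} (ω : E → ZMod 2) (v : V) : ZMod 2 :=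
  (Set.ncard {e : E | ω e = 1 ∧ v ∈ (e : Sym2 V)} : ZMod 2)

/-- A configuration is even (sourceless). -/
def IsEvenConf {V : Type*} {E : Set (Sym2 V)} (ω : E → ZMod 2) : Prop :=
  ∀ v : V, srcAt ω v = 0

/-- The set of open edges of a configuration. -/
def openEdges {V : Type*} {E : Set (Sym2 V)} (ω : E → ZMod 2) : Set (Sym2 V) :=
  {e : Sym2 V | ∃ h : e ∈ E, ω ⟨e, h⟩ = 1}

/-- The graph of open edges of a configuration. -/
def openGraph {V : Type*} {E : Set (Sym2 V)} (ω : E → ZMod 2) : SimpleGraph V :=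
  SimpleGraph.fromEdgeSet (openEdges ω)

/-- The uniform probability measure on a (finite, nonempty) set `S`. -/
def uniformOn {α : Type*} [MeasurableSpace α] (S : Set α) : Measure α :=
  (S.ncard : ENNReal)⁻¹ • Measure.sum (fun s : S => Measure.dirac (s : α))

/-- The torus `𝕋_n^d`, with vertex set `(ℤ/2nℤ)^d` and edges between `u` and `u ± eᵢ`. -/
def torusGraph (d n : ℕ) : SimpleGraph (Fin d → ZMod (2 * n)) :=
  SimpleGraph.fromRel (fun u v => ∃ i : Fin d, v = Function.update u i (u i + 1))

/-- An outgoing edge of the torus: an edge `{v, v + e₁}` whose first coordinate is `0`. -/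
def IsOutgoing (d n : ℕ) (e : Sym2 (Fin d → ZMod (2 * n))) : Prop :=
  ∃ (v : Fin d → ZMod (2 * n)) (i : Fin d), (i : ℕ) = 0 ∧ v i = 0 ∧
    e = s(v, Function.update v i (v i + 1))

/-- A wrap-around: the edge set of a cycle in the torus containing an odd number of
outgoing edges. -/
def IsWrapAround (d n : ℕ) (γ : Set (Sym2 (Fin d → ZMod (2 * n)))) : Prop :=
  ∃ (v : Fin d → ZMod (2 * n)) (c : (torusGraph d n).Walk v v),
    c.IsCycle ∧ γ = {e | e ∈ c.edges} ∧
    Odd (Set.ncard {e ∈ γ | IsOutgoing d n e})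

/-- A configuration on (a subgraph of) the torus is non-trivial if its set of open edges
contains a wrap-around. -/
def NonTrivialConf (d n : ℕ) {E : Set (Sym2 (Fin d → ZMod (2 * n)))}
    (ω : E → ZMod 2) : Prop :=
  ∃ γ, IsWrapAround d n γ ∧ γ ⊆ openEdges ω

/-!
The parity of the number of open outgoing edges detects non-triviality of an even
configuration. An even edge set has only even degrees, so none of its edges is a bridge and it
contains a cycle; peeling off cycles one at a time, an even edge set with an odd number of
outgoing edges must contain a cycle with an odd number of them, i.e. a wrap-around. Hence the
trivial `η` has an even number of open outgoing edges, and `η △ γ`, which is even, has an odd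
number of them.
-/

open SimpleGraph
open scoped symmDiff

theorem Set.even_ncard_symmDiff_iff {α : Type*} {s t : Set α} (hs : s.Finite := by toFinite_tac)
    (ht : t.Finite := by toFinite_tac) :
    Even (s ∆ t).ncard ↔ Even (s.ncard + t.ncard) := by
  have hunion : (s ∆ t).ncard + (s ∩ t).ncard = (s ∪ t).ncard := by
    refine (Set.ncard_union_eq (disjoint_symmDiff_inf s t) ((hs.union ht).subset
      Set.symmDiff_subset_union) (hs.inter_of_left t)).symm.trans ?_
    exact congrArg Set.ncard (symmDiff_sup_inf s t)
  rw [← Set.ncard_union_add_ncard_inter s t hs ht, ← hunion, add_assoc, ← two_mul,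
    Nat.even_add, iff_true_right (even_two_mul _)]

theorem Set.odd_ncard_symmDiff_iff {α : Type*} {s t : Set α} (hs : s.Finite := by toFinite_tac)
    (ht : t.Finite := by toFinite_tac) :
    Odd (s ∆ t).ncard ↔ Odd (s.ncard + t.ncard) := by
  simpa only [Nat.not_even_iff_odd] using (Set.even_ncard_symmDiff_iff hs ht).not

theorem Set.sep_symmDiff {α : Type*} (s t : Set α) (p : α → Prop) :
    {x ∈ s ∆ t | p x} = {x ∈ s | p x} ∆ {x ∈ t | p x} := by
  ext x
  simp only [Set.mem_symmDiff, Set.mem_ofPred_eq]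
  tauto

variable {V : Type*}

def IsEvenEdgeSet (S : Set (Sym2 V)) : Prop :=
  ∀ v : V, Even {e ∈ S | v ∈ e}.ncard

theorem IsEvenEdgeSet.symmDiff [Finite V] {S T : Set (Sym2 V)} (hS : IsEvenEdgeSet S)
    (hT : IsEvenEdgeSet T) : IsEvenEdgeSet (S ∆ T) := fun v => by
  rw [Set.sep_symmDiff, Set.even_ncard_symmDiff_iff]
  exact (hS v).add (hT v)

theorem SimpleGraph.Walk.IsCircuit.isEvenEdgeSet {G : SimpleGraph V} {u : V} {c : G.Walk u u}
    (hc : c.IsCircuit) : IsEvenEdgeSet c.edgeSet := fun v => by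
  classical
  have hcount : Even (c.edges.countP (v ∈ ·)) :=
    (hc.isTrail.even_countP_edges_iff v).mpr fun h => absurd rfl h
  have hset : {e ∈ c.edgeSet | v ∈ e} = ↑(c.edges.filter (v ∈ ·)).toFinset := by
    ext e
    simp [Walk.mem_edgeSet]
  rwa [hset, Set.ncard_coe_finset, List.toFinset_card_of_nodup (hc.edges_nodup.filter _),
    ← List.countP_eq_length_filter]

section Configurations

variable {E : Set (Sym2 V)}

theorem srcAt_eq_ncard (ω : E → ZMod 2) (v : V) :
    srcAt ω v = ({e ∈ openEdges ω | v ∈ e}.ncard : ZMod 2) := by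
  rw [srcAt, ← Set.ncard_image_of_injective _ Subtype.val_injective]
  congr 2
  ext e
  simp only [Set.mem_image, Set.mem_ofPred_eq, openEdges]
  constructor
  · rintro ⟨⟨e, he⟩, ⟨h1, h2⟩, rfl⟩
    exact ⟨⟨he, h1⟩, h2⟩
  · rintro ⟨⟨he, h1⟩, h2⟩
    exact ⟨⟨e, he⟩, ⟨h1, h2⟩, rfl⟩

theorem isEvenConf_iff (ω : E → ZMod 2) : IsEvenConf ω ↔ IsEvenEdgeSet (openEdges ω) := by
  simp only [IsEvenConf, IsEvenEdgeSet, srcAt_eq_ncard, ZMod.natCast_eq_zero_iff_even]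

theorem openEdges_add_indicator (ω : E → ZMod 2) {γ : Set (Sym2 V)} (hγ : γ ⊆ E) :
    openEdges (fun e : E => ω e + if (e : Sym2 V) ∈ γ then 1 else 0) = openEdges ω ∆ γ := by
  have hone : ∀ a : ZMod 2, a + 1 = 1 ↔ a ≠ 1 := by decide
  ext e
  by_cases he : e ∈ E
  · by_cases heγ : e ∈ γ <;> simp [openEdges, Set.mem_symmDiff, he, heγ, hone]
  · simp [openEdges, Set.mem_symmDiff, he, mt (@hγ e) he]

end Configurations

namespace SimpleGraph

theorem edgeSet_fromEdgeSet_of_not_isDiag {S : Set (Sym2 V)} (hS : ∀ e ∈ S, ¬ e.IsDiag) :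
    (fromEdgeSet S).edgeSet = S := by
  rw [edgeSet_fromEdgeSet, sdiff_eq_left]
  exact Set.disjoint_left.mpr hS

theorem degree_fromEdgeSet {S : Set (Sym2 V)} (hS : ∀ e ∈ S, ¬ e.IsDiag) (v : V)
    [Fintype ((fromEdgeSet S).neighborSet v)] :
    (fromEdgeSet S).degree v = {e ∈ S | v ∈ e}.ncard := by
  rw [← card_neighborSet_eq_degree, ← Nat.card_eq_fintype_card,
    ← Nat.card_congr ((fromEdgeSet S).incidenceSetEquivNeighborSet v), Nat.card_coe_set_eq,
    incidenceSet, edgeSet_fromEdgeSet_of_not_isDiag hS]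

variable [Fintype V] {G : SimpleGraph V} {u v w : V}

theorem degree_deleteEdges_edge_of_ne (hu : w ≠ u) (hv : w ≠ v) :
    (G.deleteEdges {s(u, v)}).degree w = G.degree w := by
  simp_rw [← card_neighborFinset_eq_degree]
  congr 1
  ext x
  simp [hu, hv]

theorem degree_deleteEdges_edge_add_one (huv : G.Adj u v) :
    (G.deleteEdges {s(u, v)}).degree u + 1 = G.degree u := by
  simp_rw [← card_neighborFinset_eq_degree]
  rw [← Finset.card_insert_of_notMem (a := v) (by simp)]
  congr 1
  ext x
  by_cases hx : x = v
  · simp [hx, huv]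
  · simp [hx, huv.ne]

theorem not_isBridge_of_even_degree (hdeg : ∀ w, Even (G.degree w)) (huv : G.Adj u v) :
    ¬ G.IsBridge s(u, v) := by
  rw [isBridge_iff]
  set G' := G.deleteEdges {s(u, v)}
  intro hunreach
  let C : Set V := {w | G'.Reachable u w}
  have hdegC : ∀ w : C, (G'.induce C).degree w = G'.degree w := fun w =>
    degree_induce_of_neighborSet_subset fun x hx => w.2.trans (Adj.reachable hx)
  have hu : Odd ((G'.induce C).degree ⟨u, Reachable.refl u⟩) := by
    rw [hdegC, ← Nat.not_even_iff_odd, ← Nat.even_add_one, degree_deleteEdges_edge_add_one huv]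
    exact hdeg u
  obtain ⟨⟨w, hwC⟩, hwu, hw⟩ := exists_ne_odd_degree_of_exists_odd_degree _ _ hu
  have hwv : w ≠ v := fun h => hunreach (h ▸ hwC)
  rw [hdegC, degree_deleteEdges_edge_of_ne (by simpa using hwu) hwv] at hw
  exact Nat.not_odd_iff_even.mpr (hdeg w) hw

end SimpleGraph

theorem IsEvenEdgeSet.exists_isCycle_subset [Fintype V] {G : SimpleGraph V} {S : Set (Sym2 V)}
    (hSG : S ⊆ G.edgeSet) (hS : IsEvenEdgeSet S) (hne : S.Nonempty) :
    ∃ (v : V) (c : G.Walk v v), c.IsCycle ∧ c.edgeSet ⊆ S := by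
  have hdiag : ∀ e ∈ S, ¬ e.IsDiag := fun e he => G.not_isDiag_of_mem_edgeSet (hSG he)
  have hedges := edgeSet_fromEdgeSet_of_not_isDiag hdiag
  have hle : fromEdgeSet S ≤ G := by simpa using fromEdgeSet_mono hSG
  obtain ⟨e, he⟩ := hne
  induction e using Sym2.ind with | _ a b => ?_
  have hab : (fromEdgeSet S).Adj a b := by rwa [← mem_edgeSet, hedges]
  have hbridge := not_isBridge_of_even_degree
    (fun v => by rw [degree_fromEdgeSet hdiag]; exact hS v) hab
  obtain ⟨w, c, hc, -⟩ := adj_and_reachable_delete_edges_iff_exists_cycle.mp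
    ⟨hab, by simpa [isBridge_iff] using hbridge⟩
  refine ⟨w, c.mapLe hle, hc.mapLe hle, ?_⟩
  rw [Walk.edgeSet_mapLe_eq_edgeSet]
  exact fun e he => hedges.subset (c.edges_subset_edgeSet he)

theorem IsEvenEdgeSet.exists_isCycle_odd [Fintype V] {G : SimpleGraph V} (P : Sym2 V → Prop)
    {S : Set (Sym2 V)} (hSG : S ⊆ G.edgeSet) (hS : IsEvenEdgeSet S)
    (hodd : Odd {e ∈ S | P e}.ncard) :
    ∃ (v : V) (c : G.Walk v v),
      c.IsCycle ∧ c.edgeSet ⊆ S ∧ Odd {e ∈ c.edgeSet | P e}.ncard := by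
  induction hN : S.ncard using Nat.strong_induction_on generalizing S with
  | _ N ih =>
  have hne : S.Nonempty := (Set.nonempty_of_ncard_ne_zero hodd.pos.ne').mono (Set.sep_subset _ _)
  obtain ⟨v, c, hc, hcS⟩ := hS.exists_isCycle_subset hSG hne
  by_cases hcodd : Odd {e ∈ c.edgeSet | P e}.ncard
  · exact ⟨v, c, hc, hcS, hcodd⟩
  -- Otherwise remove `c`: the rest is still even and still has an odd number of `P`-edges.
  have hrest : S ∆ c.edgeSet = S \ c.edgeSet := symmDiff_of_ge hcS
  have hc_ne : c.edgeSet.Nonempty :=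
    List.exists_mem_of_ne_nil _ (Walk.edges_eq_nil.not.mpr hc.not_nil)
  have hlt : (S \ c.edgeSet).ncard < N := hN ▸ Set.ncard_lt_ncard
    (Set.sdiff_ssubset_left_iff.mpr (by rwa [Set.inter_eq_right.mpr hcS]))
  have hodd' : Odd {e ∈ S \ c.edgeSet | P e}.ncard := by
    rw [← hrest, Set.sep_symmDiff, Set.odd_ncard_symmDiff_iff]
    exact hodd.add_even (Nat.not_odd_iff_even.mp hcodd)
  obtain ⟨w, c', hc', hc'S, hc'odd⟩ := ih _ hlt (Set.sdiff_subset.trans hSG)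
    (hrest ▸ hS.symmDiff hc.isCircuit.isEvenEdgeSet) hodd' rfl
  exact ⟨w, c', hc', hc'S.trans Set.sdiff_subset, hc'odd⟩

theorem nonTrivialConf_of_odd_outgoing {d n : ℕ} [NeZero n]
    (ω : (torusGraph d n).edgeSet → ZMod 2) (hω : IsEvenConf ω)
    (hodd : Odd {e ∈ openEdges ω | IsOutgoing d n e}.ncard) :
    NonTrivialConf d n ω := by
  obtain ⟨v, c, hc, hcω, hcodd⟩ :=
    ((isEvenConf_iff ω).mp hω).exists_isCycle_odd _ (fun _ he => he.1) hodd
  exact ⟨c.edgeSet, ⟨v, c, hc, rfl, hcodd⟩, hcω⟩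

theorem symmDiff_wrapAround_nontrivial_general (d n : ℕ) (hn : 2 ≤ n)
    (η : (torusGraph d n).edgeSet → ZMod 2) (hηeven : IsEvenConf η)
    (hηtriv : ¬ NonTrivialConf d n η)
    (γ : Set (Sym2 (Fin d → ZMod (2 * n)))) (hγ : IsWrapAround d n γ) :
    IsEvenConf (fun e : (torusGraph d n).edgeSet =>
        η e + if (e : Sym2 (Fin d → ZMod (2 * n))) ∈ γ then 1 else 0) ∧
    NonTrivialConf d n (fun e : (torusGraph d n).edgeSet =>
        η e + if (e : Sym2 (Fin d → ZMod (2 * n))) ∈ γ then 1 else 0) := by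
  have : NeZero n := ⟨by omega⟩
  obtain ⟨v, c, hc, hγc, hγodd⟩ := hγ
  have hγE : γ ⊆ (torusGraph d n).edgeSet := hγc ▸ fun _ he => c.edges_subset_edgeSet he
  have hγeven : IsEvenEdgeSet γ := by
    rw [hγc]
    exact hc.isCircuit.isEvenEdgeSet
  have hηodd : Even {e ∈ openEdges η | IsOutgoing d n e}.ncard :=
    Nat.not_odd_iff_even.mp (mt (nonTrivialConf_of_odd_outgoing η hηeven) hηtriv)
  have heven : IsEvenConf (fun e : (torusGraph d n).edgeSet =>
      η e + if (e : Sym2 (Fin d → ZMod (2 * n))) ∈ γ then 1 else 0) := by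
    rw [isEvenConf_iff, openEdges_add_indicator η hγE]
    exact ((isEvenConf_iff η).mp hηeven).symmDiff hγeven
  refine ⟨heven, nonTrivialConf_of_odd_outgoing _ heven ?_⟩
  rw [openEdges_add_indicator η hγE, Set.sep_symmDiff, Set.odd_ncard_symmDiff_iff]
  exact hηodd.add_odd hγodd

/-- The symmetric difference of a trivial even configuration on the torus
with a wrap-around is an even, non-trivial configuration. -/
theorem symmDiff_wrapAround_nontrivial (d n : ℕ) (hd : 2 ≤ d) (hn : 2 ≤ n)
    (η : (torusGraph d n).edgeSet → ZMod 2) (hηeven : IsEvenConf η)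
    (hηtriv : ¬ NonTrivialConf d n η)
    (γ : Set (Sym2 (Fin d → ZMod (2 * n)))) (hγ : IsWrapAround d n γ) :
    IsEvenConf (fun e : (torusGraph d n).edgeSet =>
        η e + if (e : Sym2 (Fin d → ZMod (2 * n))) ∈ γ then 1 else 0) ∧
    NonTrivialConf d n (fun e : (torusGraph d n).edgeSet =>
        η e + if (e : Sym2 (Fin d → ZMod (2 * n))) ∈ γ then 1 else 0) :=
  symmDiff_wrapAround_nontrivial_general d n hn η hηeven hηtriv γ hγ
end
end

section
/- Fix d ≥ 2 and n ≥ 2. Let G be a subgraph of the torus 𝕋_n^d whose edge set contains a wrap-around, and let NT ⊆ Ω_∅(G) be the set of non-trivial even configurations of G. Then the uniform probability measure on the even configurations of G satisfies UEG_G[NT] ≥ 1/2. -/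
open MeasureTheory

noncomputable section

attribute [local instance] Classical.propDecidable

/-! ### Auxiliary lemmas -/

lemma zmod2_ite (a : ZMod 2) : (if a = 1 then (1:ZMod 2) else 0) = a := by revert a; decide

lemma zmod2_cast_even {k : ℕ} (h : Even k) : (k : ZMod 2) = 0 := by
  obtain ⟨m, rfl⟩ := h
  push_cast
  have : (m : ZMod 2) + m = 2 * m := by ring
  rw [this]; simp [show (2 : ZMod 2) = 0 from rfl]

lemma zmod2_cast_odd {k : ℕ} (h : Odd k) : (k : ZMod 2) = 1 := by
  obtain ⟨m, rfl⟩ := h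
  push_cast
  have : (2 : ZMod 2) = 0 := rfl
  rw [this]; ring

/-- A generalized weighted count of open edges satisfying a predicate. -/
def confSum {V : Type*} {E : Set (Sym2 V)} [Fintype ↥E] (P : Sym2 V → Prop)
    (ω : E → ZMod 2) : ZMod 2 := ∑ e : E, if P ↑e then ω e else 0

lemma cast_ncard_eq_confSum {V : Type*} {E : Set (Sym2 V)} [Fintype ↥E]
    (P : Sym2 V → Prop) (ω : E → ZMod 2) :
    ((Set.ncard {e : E | ω e = 1 ∧ P ↑e}) : ZMod 2) = confSum P ω := by
  classical
  rw [Set.ncard_eq_toFinset_card', Set.toFinset_setOf, Finset.card_filter]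
  rw [confSum, Nat.cast_sum]
  apply Finset.sum_congr rfl
  intro e _
  by_cases hP : P ↑e
  · simp only [hP, and_true, if_true]
    rw [← zmod2_ite (ω e)]
    by_cases h1 : ω e = 1 <;> simp [h1]
  · simp [hP]

lemma srcAt_eq_confSum {V : Type*} {E : Set (Sym2 V)} [Fintype ↥E]
    (ω : E → ZMod 2) (v : V) : srcAt ω v = confSum (fun e => v ∈ e) ω := by
  rw [srcAt]; exact cast_ncard_eq_confSum (E := E) (fun e => v ∈ e) ω

lemma confSum_add {V : Type*} {E : Set (Sym2 V)} [Fintype ↥E] (P : Sym2 V → Prop)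
    (ω σ : E → ZMod 2) :
    confSum P (fun e => ω e + σ e) = confSum P ω + confSum P σ := by
  rw [confSum, confSum, confSum, ← Finset.sum_add_distrib]
  apply Finset.sum_congr rfl
  intro e _
  by_cases hP : P ↑e <;> simp [hP]

/-- The indicator configuration of a set of edges. -/
def chiConf {V : Type*} (E : Set (Sym2 V)) (γ : Set (Sym2 V)) : E → ZMod 2 :=
  fun e => if ↑e ∈ γ then 1 else 0

lemma confSum_chi {V : Type*} {E : Set (Sym2 V)} [Fintype ↥E] {γ : Set (Sym2 V)}
    (hγ : γ ⊆ E) (P : Sym2 V → Prop) :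
    confSum P (chiConf E γ) = ((Set.ncard {e ∈ γ | P e}) : ZMod 2) := by
  classical
  have himg : Subtype.val '' {e : E | (chiConf E γ) e = 1 ∧ P ↑e} = {e ∈ γ | P e} := by
    ext e
    simp only [Set.mem_image, Set.mem_setOf_eq, chiConf]
    constructor
    · rintro ⟨x, ⟨hx1, hx2⟩, rfl⟩
      by_cases h : ↑x ∈ γ
      · exact ⟨h, hx2⟩
      · simp [h] at hx1
    · rintro ⟨h1, h2⟩
      exact ⟨⟨e, hγ h1⟩, ⟨by simp [h1], h2⟩, rfl⟩
  rw [← cast_ncard_eq_confSum P (chiConf E γ), ← himg,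
    Set.ncard_image_of_injective _ Subtype.val_injective]

lemma ncard_mem_list {α : Type*} [DecidableEq α] (l : List α) (hl : l.Nodup) (P : α → Prop) :
    {e | e ∈ l ∧ P e}.ncard = l.countP (fun e => decide (P e)) := by
  have h1 : {e | e ∈ l ∧ P e} = ↑(l.filter (fun e => decide (P e))).toFinset := by
    ext e
    simp [List.mem_filter, decide_eq_true_iff]
  rw [h1, Set.ncard_coe_finset,
    List.toFinset_card_of_nodup (hl.filter _), List.countP_eq_length_filter]

lemma cycle_even_incidence {V : Type*} [DecidableEq V] {G' : SimpleGraph V} {x : V}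
    {c : G'.Walk x x} (hc : c.IsCycle) (v : V) :
    Even (Set.ncard {e ∈ {e | e ∈ c.edges} | v ∈ e}) := by
  have ht := hc.isTrail
  have h := (ht.even_countP_edges_iff v).mpr (fun h => absurd rfl h)
  have := ncard_mem_list c.edges ht.edges_nodup (fun e => v ∈ e)
  simp only [Set.sep_setOf] at *
  rw [this]
  convert h using 2 with e
  congr!

lemma path_start_edge_unique {V : Type*} {G' : SimpleGraph V} {u w : V} {p : G'.Walk u w}
    (hp : p.IsPath) {e1 e2 : Sym2 V} (he1 : e1 ∈ p.edges) (he2 : e2 ∈ p.edges)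
    (hu1 : u ∈ e1) (hu2 : u ∈ e2) : e1 = e2 := by
  cases p with
  | nil => simp at he1
  | cons h q =>
    rw [SimpleGraph.Walk.cons_isPath_iff] at hp
    have main : ∀ e : Sym2 V, e ∈ (SimpleGraph.Walk.cons h q).edges → u ∈ e →
        ¬ e ∈ q.edges := by
      intro e _ hue h2
      apply hp.2
      induction e using Sym2.ind with
      | _ a b =>
        rcases Sym2.mem_iff.mp hue with rfl | rfl
        · exact SimpleGraph.Walk.fst_mem_support_of_mem_edges q h2
        · exact SimpleGraph.Walk.snd_mem_support_of_mem_edges q h2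
    rw [SimpleGraph.Walk.edges_cons] at he1 he2
    rcases List.mem_cons.mp he1 with h1 | h1
    · rcases List.mem_cons.mp he2 with h2 | h2
      · rw [h1, h2]
      · exact absurd h2 (main e2 he2 hu2)
    · exact absurd h1 (main e1 he1 hu1)

lemma exists_cycle_of_even {V : Type*} [Fintype V] [DecidableEq V] {G' : SimpleGraph V}
    {E : Set (Sym2 V)} (hE : E ⊆ G'.edgeSet) (ω : E → ZMod 2) (hω : IsEvenConf ω)
    {e0 : Sym2 V} (he0 : e0 ∈ openEdges ω) :
    ∃ (x : V) (c : G'.Walk x x), c.IsCycle ∧ ∀ e ∈ c.edges, e ∈ openEdges ω := by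
  have hopen : openEdges ω ⊆ G'.edgeSet := fun e he => hE he.1
  set S : Set ℕ := {l | ∃ (u w : V) (p : G'.Walk u w), p.IsPath ∧
    (∀ e ∈ p.edges, e ∈ openEdges ω) ∧ p.length = l} with hS
  have h1S : 1 ∈ S := by
    induction e0 using Sym2.ind with
    | _ a b =>
      have hab : G'.Adj a b := (SimpleGraph.mem_edgeSet G').mp (hopen he0)
      refine ⟨a, b, SimpleGraph.Walk.cons hab SimpleGraph.Walk.nil, ?_, ?_, rfl⟩
      · simp [hab.ne]
      · intro e he; simp at he; subst he; exact he0
  have hSne : S.Nonempty := ⟨1, h1S⟩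
  have hSbd : BddAbove S := by
    refine ⟨Fintype.card V, ?_⟩
    rintro l ⟨u, w, p, hp, -, rfl⟩
    exact le_of_lt hp.length_lt
  obtain ⟨u, w, p, hp, hpe, hlen⟩ := Nat.sSup_mem hSne hSbd
  have hmax : ∀ l ∈ S, l ≤ p.length := by rw [hlen]; exact fun l hl => le_csSup hSbd hl
  have hlen1 : 1 ≤ p.length := hmax 1 h1S
  cases p with
  | nil => simp at hlen1
  | cons hadj0 q =>
    rename_i b
    set p := SimpleGraph.Walk.cons hadj0 q with hpdef
    have hℓmem : s(u, b) ∈ p.edges := by simp [hpdef]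
    have hℓopen : s(u, b) ∈ openEdges ω := hpe _ hℓmem
    have hℓE : s(u, b) ∈ E := hℓopen.1
    set Iu : Set E := {e : E | ω e = 1 ∧ u ∈ (e : Sym2 V)} with hIu
    have hx0 : (⟨s(u, b), hℓE⟩ : E) ∈ Iu := ⟨hℓopen.2, Sym2.mem_mk_left u b⟩
    have heven : Even Iu.ncard := by
      have := hω u
      rw [srcAt] at this
      rw [ZMod.natCast_eq_zero_iff] at this
      exact (even_iff_two_dvd).mpr this
    have h1lt : 1 < Iu.ncard :=
      Set.one_lt_ncard_of_nonempty_of_even (Set.toFinite _) ⟨_, hx0⟩ heven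
    obtain ⟨f1, hf1, hf1ne⟩ := Set.exists_ne_of_one_lt_ncard h1lt ⟨s(u, b), hℓE⟩
    have hf1val : (↑f1 : Sym2 V) ≠ s(u, b) := fun h => hf1ne (Subtype.ext h)
    have hf1open : (↑f1 : Sym2 V) ∈ openEdges ω := ⟨f1.2, hf1.1⟩
    obtain ⟨x, hfx⟩ := Sym2.mem_iff_exists.mp hf1.2
    have hadj : G'.Adj u x := (SimpleGraph.mem_edgeSet G').mp (hE (hfx ▸ f1.2))
    have hxb : x ≠ b := by
      rintro rfl
      exact hf1val hfx
    by_cases hxs : x ∈ p.support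
    · refine ⟨x, SimpleGraph.Walk.cons hadj.symm (p.takeUntil x hxs), ?_, ?_⟩
      · rw [SimpleGraph.Walk.cons_isCycle_iff]
        refine ⟨hp.takeUntil hxs, fun hmem => ?_⟩
        have hmem' : s(x, u) ∈ p.edges := SimpleGraph.Walk.edges_takeUntil_subset p hxs hmem
        have : s(x, u) = s(u, b) := path_start_edge_unique hp hmem' hℓmem
          (Sym2.mem_mk_right x u) (Sym2.mem_mk_left u b)
        rw [Sym2.eq_swap, ← hfx] at this
        exact hf1val this
      · intro e he
        rw [SimpleGraph.Walk.edges_cons] at he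
        rcases List.mem_cons.mp he with rfl | he2
        · rw [Sym2.eq_swap, ← hfx]; exact hf1open
        · exact hpe _ (SimpleGraph.Walk.edges_takeUntil_subset p hxs he2)
    · exfalso
      have hlong : (SimpleGraph.Walk.cons hadj.symm p).length ∈ S :=
        ⟨x, w, SimpleGraph.Walk.cons hadj.symm p, hp.cons hxs, ?_, rfl⟩
      · have := hmax _ hlong
        simp [SimpleGraph.Walk.length_cons] at this
      · intro e he
        rw [SimpleGraph.Walk.edges_cons] at he
        rcases List.mem_cons.mp he with rfl | he2
        · rw [Sym2.eq_swap, ← hfx]; exact hf1open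
        · exact hpe _ he2

lemma main_nontrivial (d n : ℕ) [Fintype (ZMod (2 * n))]
    {E : Set (Sym2 (Fin d → ZMod (2 * n)))} [Fintype ↥E]
    (hE : E ⊆ (torusGraph d n).edgeSet) :
    ∀ (k : ℕ) (ω : E → ZMod 2), (openEdges ω).ncard = k → IsEvenConf ω →
      confSum (IsOutgoing d n) ω = 1 → NonTrivialConf d n ω := by
  intro k
  induction k using Nat.strong_induction_on with
  | _ k IH =>
    intro ω hk hev hw
    -- find an open edge
    have hWne : {e : E | ω e = 1 ∧ IsOutgoing d n ↑e}.Nonempty := by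
      by_contra hcon
      rw [Set.not_nonempty_iff_eq_empty] at hcon
      rw [← cast_ncard_eq_confSum, hcon, Set.ncard_empty] at hw
      simp at hw
    obtain ⟨f0, hf0⟩ := hWne
    have he0 : (↑f0 : Sym2 _) ∈ openEdges ω := ⟨f0.2, hf0.1⟩
    obtain ⟨x, c, hc, hce⟩ := exists_cycle_of_even hE ω hev he0
    set γc : Set (Sym2 (Fin d → ZMod (2 * n))) := {e | e ∈ c.edges} with hγc
    have hγsub : γc ⊆ openEdges ω := fun e he => hce e he
    have hγE : γc ⊆ E := fun e he => (hγsub he).1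
    by_cases hodd : Odd (Set.ncard {e ∈ γc | IsOutgoing d n e})
    · exact ⟨γc, ⟨x, c, hc, rfl, hodd⟩, hγsub⟩
    · have heven := Nat.not_odd_iff_even.mp hodd
      set ω' : E → ZMod 2 := fun e => ω e + chiConf E γc e with hω'
      have hχsrc : ∀ v, srcAt (chiConf E γc) v = 0 := by
        intro v
        rw [srcAt_eq_confSum, confSum_chi hγE]
        exact zmod2_cast_even (cycle_even_incidence hc v)
      have hev' : IsEvenConf ω' := by
        intro v
        rw [hω', srcAt_eq_confSum, confSum_add, ← srcAt_eq_confSum, ← srcAt_eq_confSum,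
          hev v, hχsrc v, add_zero]
      have hw' : confSum (IsOutgoing d n) ω' = 1 := by
        rw [hω', confSum_add, hw, confSum_chi hγE, zmod2_cast_even heven, add_zero]
      have hopen' : openEdges ω' = openEdges ω \ γc := by
        ext e
        constructor
        · rintro ⟨hEe, h1⟩
          by_cases hγ : e ∈ γc
          · exfalso
            obtain ⟨hEe', hω1⟩ := hγsub hγ
            have : ω ⟨e, hEe⟩ = 1 := hω1
            rw [hω'] at h1
            simp only [chiConf, hγ, if_pos] at h1
            rw [this] at h1
            simp at h1
          · refine ⟨⟨hEe, ?_⟩, hγ⟩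
            rw [hω'] at h1
            simp only [chiConf, hγ, if_neg, not_false_iff] at h1
            rwa [add_zero] at h1
        · rintro ⟨⟨hEe, h1⟩, hγ⟩
          refine ⟨hEe, ?_⟩
          rw [hω']
          simp only [chiConf, hγ, if_neg, not_false_iff]
          rwa [add_zero]
      have hcne : γc.Nonempty := by
        have h3 := hc.three_le_length
        have : c.edges ≠ [] := by
          intro hnil
          have := c.length_edges
          rw [hnil] at this
          simp at this
          omega
        obtain ⟨e1, he1⟩ := List.exists_mem_of_ne_nil _ this
        exact ⟨e1, he1⟩
      have hlt : (openEdges ω').ncard < k := by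
        rw [hopen', ← hk]
        apply Set.ncard_lt_ncard _ (Set.toFinite _)
        constructor
        · exact Set.diff_subset
        · intro hsub
          obtain ⟨e1, he1⟩ := hcne
          exact (hsub (hγsub he1)).2 he1
      obtain ⟨γ, hγw, hγs⟩ := IH _ hlt ω' rfl hev' hw'
      refine ⟨γ, hγw, fun e he => ?_⟩
      have := hγs he
      rw [hopen'] at this
      exact this.1


/-- If the edge set of a subgraph `G` of the torus contains a wrap-around,
then the uniform even subgraph of `G` is non-trivial with probability at least `1/2`. -/
theorem ueg_nontrivial_half (d n : ℕ) (hd : 2 ≤ d) (hn : 2 ≤ n)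
    (G : SimpleGraph (Fin d → ZMod (2 * n))) (hG : G ≤ torusGraph d n)
    (hwrap : ∃ γ, IsWrapAround d n γ ∧ γ ⊆ G.edgeSet) :
    (1 : ENNReal) / 2 ≤
      uniformOn {ω : G.edgeSet → ZMod 2 | IsEvenConf ω}
        {ω : G.edgeSet → ZMod 2 | IsEvenConf ω ∧ NonTrivialConf d n ω} := by
  haveI : NeZero (2 * n) := ⟨by omega⟩
  set E : Set (Sym2 (Fin d → ZMod (2 * n))) := G.edgeSet with hEdef
  haveI : Fintype ↥E := Fintype.ofFinite _
  have hE : E ⊆ (torusGraph d n).edgeSet := SimpleGraph.edgeSet_mono hG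
  obtain ⟨γ0, ⟨x0, c0, hc0, hγ0eq, hodd0⟩, hsub0⟩ := hwrap
  set χ0 : E → ZMod 2 := chiConf E γ0 with hχ0
  have hχ0even : ∀ v, srcAt χ0 v = 0 := by
    intro v
    rw [hχ0, srcAt_eq_confSum, confSum_chi hsub0, hγ0eq]
    exact zmod2_cast_even (cycle_even_incidence hc0 v)
  have hχ0w : confSum (IsOutgoing d n) χ0 = 1 := by
    rw [hχ0, confSum_chi hsub0]
    exact zmod2_cast_odd hodd0
  set Ev : Set (E → ZMod 2) := {ω | IsEvenConf ω} with hEv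
  set A : Set (E → ZMod 2) := {ω | IsEvenConf ω ∧ NonTrivialConf d n ω} with hA
  have hAsub : A ⊆ Ev := fun ω hω => hω.1
  -- the involution
  set f : (E → ZMod 2) → (E → ZMod 2) := fun ω e => ω e + χ0 e with hf
  have hzz : ∀ a b : ZMod 2, a + b + b = a := by decide
  have hinj : Function.Injective f := by
    intro a b hab
    funext e
    have := congrFun hab e
    simp only [hf] at this
    have h2 := congrArg (· + χ0 e) this
    simpa [hzz] using h2
  have hwind0 : ∀ ω : E → ZMod 2, IsEvenConf ω → ¬ NonTrivialConf d n ω →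
      confSum (IsOutgoing d n) ω = 0 := by
    intro ω hev hnt
    by_contra hne
    have h1 : confSum (IsOutgoing d n) ω = 1 := by
      have : ∀ a : ZMod 2, a ≠ 0 → a = 1 := by decide
      exact this _ hne
    exact hnt (main_nontrivial d n hE _ ω rfl hev h1)
  have hmap : ∀ ω ∈ Ev \ A, f ω ∈ A := by
    rintro ω ⟨hev, hna⟩
    have hnt : ¬ NonTrivialConf d n ω := fun h => hna ⟨hev, h⟩
    have hfev : IsEvenConf (f ω) := by
      intro v
      rw [hf]
      simp only
      rw [srcAt_eq_confSum, confSum_add, ← srcAt_eq_confSum, ← srcAt_eq_confSum,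
        hev v, hχ0even v, add_zero]
    have hfw : confSum (IsOutgoing d n) (f ω) = 1 := by
      rw [hf]
      simp only
      rw [confSum_add, hwind0 ω hev hnt, hχ0w, zero_add]
    exact ⟨hfev, main_nontrivial d n hE _ (f ω) rfl hfev hfw⟩
  have hcard1 : (Ev \ A).ncard ≤ A.ncard :=
    Set.ncard_le_ncard_of_injOn f hmap hinj.injOn (A.toFinite)
  have hcard2 : (Ev \ A).ncard + A.ncard = Ev.ncard :=
    Set.ncard_diff_add_ncard_of_subset hAsub (Ev.toFinite)
  have hcard : Ev.ncard ≤ 2 * A.ncard := by omega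
  -- Ev is nonempty
  have hEvne : Ev.Nonempty := by
    refine ⟨fun _ => 0, fun v => ?_⟩
    rw [srcAt]
    have : {e : E | (0 : ZMod 2) = 1 ∧ v ∈ (e : Sym2 _)} = ∅ := by
      ext e; simp
    rw [this, Set.ncard_empty]
    simp
  have hEv0 : (0 : ℕ) < Ev.ncard := (Set.ncard_pos (Ev.toFinite)).mpr hEvne
  -- measurability
  have hms : ∀ s : Set (E → ZMod 2), MeasurableSet s := by
    have hsing : ∀ g : E → ZMod 2, MeasurableSet {g} := by
      intro g
      have h1 : {g} = ⋂ e : E, (fun f : E → ZMod 2 => f e) ⁻¹' {g e} := by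
        ext f
        simp [funext_iff]
      rw [h1]
      exact MeasurableSet.iInter fun e =>
        measurable_pi_apply e MeasurableSpace.measurableSet_top
    intro s
    have h2 : s = ⋃ g ∈ s, {g} := by simp
    rw [h2]
    exact MeasurableSet.biUnion s.to_countable (fun g _ => hsing g)
  -- compute the measure
  rw [uniformOn, Measure.smul_apply, Measure.sum_apply _ (hms A), smul_eq_mul]
  have hdirac : ∀ s : Ev, Measure.dirac (s : E → ZMod 2) A
      = A.indicator (fun _ => (1 : ENNReal)) ↑s := fun s => Measure.dirac_apply' _ (hms A)
  simp_rw [hdirac]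
  haveI : Fintype ↥Ev := Fintype.ofFinite _
  rw [tsum_fintype]
  have hsum : ∑ s : Ev, A.indicator (fun _ => (1 : ENNReal)) ↑s = (A.ncard : ENNReal) := by
    have h1 : ∀ s : Ev, A.indicator (fun _ => (1 : ENNReal)) ↑s
        = if (↑s : E → ZMod 2) ∈ A then 1 else 0 := by
      intro s; rw [Set.indicator_apply]
    simp_rw [h1]
    rw [Finset.sum_boole]
    norm_cast
    have h2 : (Finset.univ.filter (fun s : Ev => (↑s : E → ZMod 2) ∈ A)).card
        = {s : Ev | (↑s : E → ZMod 2) ∈ A}.ncard := by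
      rw [Set.ncard_eq_toFinset_card', Set.toFinset_setOf]
    rw [h2]
    have h3 : Subtype.val '' {s : Ev | (↑s : E → ZMod 2) ∈ A} = A := by
      ext ω
      simp only [Set.mem_image, Set.mem_setOf_eq]
      constructor
      · rintro ⟨x, hx, rfl⟩; exact hx
      · intro hω; exact ⟨⟨ω, hAsub hω⟩, hω, rfl⟩
    rw [← Set.ncard_image_of_injective _ Subtype.val_injective, h3]
  rw [hsum]
  -- final arithmetic
  have hb0 : (Ev.ncard : ENNReal) ≠ 0 := by
    simp only [ne_eq, Nat.cast_eq_zero]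
    omega
  have hbt : (Ev.ncard : ENNReal) ≠ ⊤ := ENNReal.natCast_ne_top _
  rw [← ENNReal.div_eq_inv_mul, one_div,
    ENNReal.le_div_iff_mul_le (Or.inl hb0) (Or.inl hbt)]
  have h2a : (Ev.ncard : ENNReal) ≤ 2 * A.ncard := by exact_mod_cast hcard
  calc (2 : ENNReal)⁻¹ * Ev.ncard ≤ 2⁻¹ * (2 * A.ncard) := by
        exact mul_le_mul_right h2a _
    _ = (2⁻¹ * 2) * A.ncard := by ring
    _ = A.ncard := by
        rw [ENNReal.inv_mul_cancel (by norm_num) (by norm_num), one_mul]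
end
end
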